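/- Let X be a proper geodesic δ-hyperbolic space, Γ a group acting properly by isometries on X with basepoint o, k ⊆ X a compact set containing o, and K the closed 6δ-neighbourhood of k. Then there exist a finite subset S ⊆ Γ and r ≥ 0 such that for every T ≥ 0, U_K^T ∩ Γ·o is contained in the union of the shadows O_o(βo,r) over all β ∈ S·Γ_k with d(o,βo) ≥ T − r. -/

import Mathlib

open Filter Topology Metric Set MeasureTheory Pointwise
open scoped symmDiff ENNReal NNReal

noncomputable section

namespace SPR

variable {X : Type} [MetricSpace X]

/-- The Gromov product of `x` and `y` seen from `z`. -/
def gromovProd (x y z : X) : ℝ := (dist x z + dist y z - dist x y) / 2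

/-- `X` is `δ`-hyperbolic: the four point inequality holds. -/
def GromovHyperbolicWith (δ : ℝ) (X : Type) [MetricSpace X] : Prop :=
  ∀ x y z t : X, min (gromovProd x y t) (gromovProd y z t) - δ ≤ gromovProd x z t

/-- `c` parametrizes a geodesic (by arc length) on the set `I` of times. -/
def IsGeodesicOn (c : ℝ → X) (I : Set ℝ) : Prop :=
  ∀ s ∈ I, ∀ t ∈ I, dist (c s) (c t) = |s - t|

/-- Every pair of points of `X` is joined by a geodesic. -/
def GeodesicSpace (X : Type) [MetricSpace X] : Prop :=
  ∀ x y : X, ∃ c : ℝ → X,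
    c 0 = x ∧ c (dist x y) = y ∧ IsGeodesicOn c (Set.Icc 0 (dist x y))

/-- A geodesic ray, parametrized by `[0,∞)`. -/
def IsGeodesicRay (c : ℝ → X) : Prop := IsGeodesicOn c (Set.Ici 0)

/-- The action of `Γ` on `X` is (metrically) proper. -/
def ProperAction (Γ : Type) (X : Type) [Group Γ] [MetricSpace X] [MulAction Γ X] : Prop :=
  ∀ L : Set X, IsCompact L → {γ : Γ | ∃ x ∈ L, γ • x ∈ L}.Finite

variable {Γ : Type} [Group Γ] [MulAction Γ X]

/-- The critical exponent (exponential growth rate) of a subset `S` of `Γ`,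
for the action on `X` with base point `o`. -/
def critExp (o : X) (S : Set Γ) : ℝ :=
  Filter.limsup
    (fun r : ℝ => Real.log (Nat.card {γ : Γ // γ ∈ S ∧ dist o (γ • o) ≤ r}) / r)
    Filter.atTop

/-- The critical exponent `h_Γ` of the whole group. -/
def fullCritExp (Γ : Type) [Group Γ] [MulAction Γ X] (o : X) : ℝ :=
  critExp o (Set.univ : Set Γ)

/-- The set `Γ_K` of elements `γ ∈ Γ` for which there are `x, y ∈ K` and a geodesic
from `x` to `γ y` meeting `Γ ⬝ K` only inside `K ∪ γ K`. -/
def gammaK (Γ : Type) [Group Γ] [MulAction Γ X] (K : Set X) : Set Γ :=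
  {γ : Γ | ∃ x ∈ K, ∃ y ∈ K, ∃ c : ℝ → X,
    c 0 = x ∧ c (dist x (γ • y)) = γ • y ∧ IsGeodesicOn c (Set.Icc 0 (dist x (γ • y))) ∧
    (c '' Set.Icc 0 (dist x (γ • y))) ∩ (⋃ g : Γ, g • K) ⊆ K ∪ γ • K}

/-- The entropy at infinity `h_Γ^∞`. -/
def entropyAtInfinity (Γ : Type) [Group Γ] [MulAction Γ X] (o : X) : ℝ :=
  sInf {h : ℝ | ∃ K : Set X, IsCompact K ∧ h = critExp o (gammaK Γ K)}

/-- The action of `Γ` on `X` is strongly positively recurrent (it has a growth gap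
at infinity). -/
def SPRAction (Γ : Type) [Group Γ] [MulAction Γ X] (o : X) : Prop :=
  entropyAtInfinity Γ o < fullCritExp Γ o

/-! ### The Gromov boundary -/

theorem gromovProd_ge (x y z w : X) :
    gromovProd x y z - dist z w ≤ gromovProd x y w := by
  have h1 : dist x z ≤ dist x w + dist w z := dist_triangle x w z
  have h2 : dist y z ≤ dist y w + dist w z := dist_triangle y w z
  have h3 : dist w z = dist z w := dist_comm w z
  simp only [gromovProd]
  linarith

/-- A sequence converging to infinity. -/
def SeqToInf (o : X) (u : ℕ → X) : Prop :=
  Tendsto (fun p : ℕ × ℕ => gromovProd (u p.1) (u p.2) o) atTop atTop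

/-- Two sequences converging to infinity define the same boundary point. -/
def seqRel (o : X) (u v : {u : ℕ → X // SeqToInf o u}) : Prop :=
  Tendsto (fun n => gromovProd (u.1 n) (v.1 n) o) atTop atTop

/-- The Gromov boundary of `X` (described with base point `o`). -/
def GromovBoundary (o : X) : Type := Quot (seqRel o)

def mkBoundary (o : X) (u : {u : ℕ → X // SeqToInf o u}) : GromovBoundary o :=
  Quot.mk (seqRel o) u

instance (o : X) : TopologicalSpace (GromovBoundary o) :=
  inferInstanceAs (TopologicalSpace (Quot (seqRel o)))

instance (o : X) : MeasurableSpace (GromovBoundary o) := borel (GromovBoundary o)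

/-- A ray `c` ends at the boundary point `ξ`. -/
def endsAt (o : X) (c : ℝ → X) (ξ : GromovBoundary o) : Prop :=
  ∃ h : SeqToInf o (fun n : ℕ => c n), mkBoundary o ⟨fun n : ℕ => c n, h⟩ = ξ

/-- The bordification `X ∪ ∂X` of `X`. -/
def Bord (o : X) : Type := X ⊕ GromovBoundary o

def Bord.ofX (o : X) (x : X) : Bord o := Sum.inl x

def Bord.ofB (o : X) (ξ : GromovBoundary o) : Bord o := Sum.inr ξ

/-- Extension of the Gromov product: a point of `X` and a boundary point,
seen from `base`; infimum over representative sequences of the liminf. -/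
def gpPB (o base x : X) (ξ : GromovBoundary o) : ℝ :=
  sInf {t : ℝ | ∃ u : {u : ℕ → X // SeqToInf o u}, mkBoundary o u = ξ ∧
    t = Filter.liminf (fun n => gromovProd x (u.1 n) base) Filter.atTop}

/-- Extension of the Gromov product to two boundary points, seen from `base`. -/
def gpBB (o base : X) (ξ η : GromovBoundary o) : EReal :=
  sInf {t : EReal | ∃ u v : {u : ℕ → X // SeqToInf o u},
    mkBoundary o u = ξ ∧ mkBoundary o v = η ∧
    t = Filter.liminf (fun n => ((gromovProd (u.1 n) (v.1 n) base : ℝ) : EReal)) Filter.atTop}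

/-- The Gromov product of two points of the bordification `X ∪ ∂X`, seen from `base`. -/
def gpE (o base : X) (p q : X ⊕ GromovBoundary o) : EReal :=
  match p, q with
  | Sum.inl x, Sum.inl y => ((gromovProd x y base : ℝ) : EReal)
  | Sum.inl x, Sum.inr ξ => ((gpPB o base x ξ : ℝ) : EReal)
  | Sum.inr ξ, Sum.inl x => ((gpPB o base x ξ : ℝ) : EReal)
  | Sum.inr ξ, Sum.inr η => gpBB o base ξ η

/-- The topology of the bordification: generated by the open subsets of `X`
together with the sets `{p | ⟨p,ξ⟩_o > T}`. -/
instance (o : X) : TopologicalSpace (Bord o) :=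
  TopologicalSpace.generateFrom
    ({V : Set (Bord o) | ∃ U : Set X, IsOpen U ∧ V = Bord.ofX o '' U} ∪
     {V : Set (Bord o) | ∃ (ξ : GromovBoundary o) (T : ℝ),
        V = {p : Bord o | (T : EReal) < gpE o o p (Bord.ofB o ξ)}})

/-- `c` together with its interval of definition `I` is a geodesic joining
the point `x ∈ X` to the point `p` of the bordification. -/
def JoinsBord (o : X) (c : ℝ → X) (I : Set ℝ) (x : X) (p : Bord o) : Prop :=
  (∃ y : X, p = Bord.ofX o y ∧ I = Set.Icc 0 (dist x y) ∧ c 0 = x ∧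
    c (dist x y) = y ∧ IsGeodesicOn c I) ∨
  (∃ ξ : GromovBoundary o, p = Bord.ofB o ξ ∧ I = Set.Ici 0 ∧ c 0 = x ∧
    IsGeodesicRay c ∧ endsAt o c ξ)

/-- The shadow `O_o(x,r)`: points of `X ∪ ∂X` joined to `o` by a geodesic
meeting the closed ball `B(x,r)`. -/
def shadow (o x : X) (r : ℝ) : Set (Bord o) :=
  {p | ∃ (c : ℝ → X) (I : Set ℝ), JoinsBord o c I o p ∧ ∃ t ∈ I, c t ∈ Metric.closedBall x r}

/-- The `K`-radial limit set. -/
def radialLimitSet (o : X) (Γ : Type) [Group Γ] [MulAction Γ X] (K : Set X) :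
    Set (GromovBoundary o) :=
  {ξ | ∃ c : ℝ → X, IsGeodesicRay c ∧ endsAt o c ξ ∧
    {γ : Γ | ∃ t : ℝ, 0 ≤ t ∧ c t ∈ γ • K}.Infinite}

/-- The radial limit set. -/
def radialLimitSetFull (o : X) (Γ : Type) [Group Γ] [MulAction Γ X] :
    Set (GromovBoundary o) :=
  {ξ | ∃ K : Set X, IsCompact K ∧ ξ ∈ radialLimitSet o Γ K}

/-- The set `𝓛_K` of endpoints of geodesic rays starting in `K` and meeting
`Γ ⬝ K` only inside `K`. -/
def LK (o : X) (Γ : Type) [Group Γ] [MulAction Γ X] (K : Set X) :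
    Set (GromovBoundary o) :=
  {ξ | ∃ c : ℝ → X, IsGeodesicRay c ∧ c 0 ∈ K ∧ endsAt o c ξ ∧
    (c '' Set.Ici 0) ∩ (⋃ g : Γ, g • K) ⊆ K}

/-- The neighbourhood `U_K^T` of `𝓛_K` in the bordification. -/
def UKT (o : X) (Γ : Type) [Group Γ] [MulAction Γ X] (K : Set X) (T : ℝ) :
    Set (Bord o) :=
  {p | ∃ ξ ∈ LK o Γ K, (T : EReal) ≤ gpE o o p (Bord.ofB o ξ)}

/-! ### The boundary action -/

section IsometricAction

variable [IsIsometricSMul Γ X]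

theorem gromovProd_smul (γ : Γ) (x y o : X) :
    gromovProd (γ • x) (γ • y) o = gromovProd x y (γ⁻¹ • o) := by
  have h1 : dist (γ • x) o = dist x (γ⁻¹ • o) := by
    conv_lhs => rw [← smul_inv_smul γ o]
    exact dist_smul γ x (γ⁻¹ • o)
  have h2 : dist (γ • y) o = dist y (γ⁻¹ • o) := by
    conv_lhs => rw [← smul_inv_smul γ o]
    exact dist_smul γ y (γ⁻¹ • o)
  have h3 : dist (γ • x) (γ • y) = dist x y := dist_smul γ x y
  simp only [gromovProd, h1, h2, h3]

theorem tendsto_gp_smul {ι : Type} {l : Filter ι} (o : X) (γ : Γ) {u v : ι → X}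
    (h : Tendsto (fun n => gromovProd (u n) (v n) o) l atTop) :
    Tendsto (fun n => gromovProd (γ • u n) (γ • v n) o) l atTop := by
  refine tendsto_atTop_mono (fun n => ?_)
    (tendsto_atTop_add_const_right _ (-(dist o (γ⁻¹ • o))) h)
  have h1 := gromovProd_ge (u n) (v n) o (γ⁻¹ • o)
  rw [gromovProd_smul]
  linarith

/-- The action of `Γ` on the Gromov boundary. -/
def boundarySmul (o : X) (γ : Γ) : GromovBoundary o → GromovBoundary o :=
  Quot.map
    (fun u => ⟨fun n => γ • u.1 n,
      tendsto_gp_smul o γ (u := fun p : ℕ × ℕ => u.1 p.1) (v := fun p : ℕ × ℕ => u.1 p.2) u.2⟩)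
    (fun _ _ huv => tendsto_gp_smul o γ huv)

/-- The diagonal action of `γ` on `∂X × ∂X`. -/
def diagSmul (o : X) (γ : Γ) (p : GromovBoundary o × GromovBoundary o) :
    GromovBoundary o × GromovBoundary o :=
  (boundarySmul o γ p.1, boundarySmul o γ p.2)

end IsometricAction

/-! ### Patterson–Sullivan measures -/

/-- A slowly increasing function, in the sense of Patterson. -/
def SlowlyIncreasing (θ : ℝ → ℝ) : Prop :=
  ∀ ε : ℝ, 0 < ε → ∃ t₀ : ℝ, ∀ t : ℝ, t₀ ≤ t → ∀ u : ℝ, 0 ≤ u →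
    θ (t + u) ≤ Real.exp (ε * u) * θ t

/-- The Patterson weight `θ(d(o,γo)) e^{-s d(o,γo)}`. -/
def psWeight (Γ : Type) [Group Γ] [MulAction Γ X] (o : X) (θ : ℝ → ℝ) (s : ℝ)
    (γ : Γ) : ℝ :=
  θ (dist o (γ • o)) * Real.exp (-s * dist o (γ • o))

/-- `ν` is a Patterson–Sullivan measure of `Γ` on the Gromov boundary:
a probability measure obtained as a weak-* limit, along some sequence `sₙ ↓ h_Γ`,
of the normalized Patterson-weighted orbital measures. -/
def IsPSMeasure (Γ : Type) [Group Γ] [MulAction Γ X] (o : X)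
    (ν : Measure (GromovBoundary o)) : Prop :=
  IsProbabilityMeasure ν ∧
  ∃ θ : ℝ → ℝ, (∀ t, 0 < θ t) ∧ Monotone θ ∧ SlowlyIncreasing θ ∧
    (∀ s : ℝ, Summable (psWeight Γ o θ s) ↔ fullCritExp Γ o < s) ∧
    ∃ sq : ℕ → ℝ, (∀ n, fullCritExp Γ o < sq n) ∧
      Tendsto sq atTop (nhds (fullCritExp Γ o)) ∧
      ∀ f : Bord o → ℝ, Continuous f → (∃ M : ℝ, ∀ p, |f p| ≤ M) →
        Tendsto (fun n =>
            (∑' γ : Γ, psWeight Γ o θ (sq n) γ * f (Bord.ofX o (γ • o))) /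
            (∑' γ : Γ, psWeight Γ o θ (sq n) γ)) atTop
          (nhds (∫ ξ, f (Bord.ofB o ξ) ∂ν))

/-! ### The Bowen–Margulis current and the abstract geodesic flow -/

section BowenMargulis

variable [IsIsometricSMul Γ X]

/-- `μ` is a Bowen–Margulis current associated to the Patterson–Sullivan measure `ν`:
a `Γ`-invariant measure on `∂X × ∂X`, vanishing on the diagonal, absolutely continuous
with respect to `ν ⊗ ν` with density comparable to `e^{2 h_Γ ⟨η,ξ⟩_o}`. -/
def IsBMCurrent (Γ : Type) [Group Γ] [MulAction Γ X] [IsIsometricSMul Γ X] (o : X)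
    (ν : Measure (GromovBoundary o))
    (μ : Measure (GromovBoundary o × GromovBoundary o)) : Prop :=
  μ {p | p.1 = p.2} = 0 ∧
  (∀ γ : Γ, Measure.map (diagSmul o γ) μ = μ) ∧
  μ ≪ ν.prod ν ∧
  ∃ C₀ : ℝ, 0 < C₀ ∧
    ∀ᵐ p ∂(ν.prod ν), p.1 ≠ p.2 →
      C₀⁻¹ * Real.exp (2 * fullCritExp Γ o * (gpBB o o p.1 p.2).toReal)
          ≤ (μ.rnDeriv (ν.prod ν) p).toReal ∧
      (μ.rnDeriv (ν.prod ν) p).toReal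
          ≤ C₀ * Real.exp (2 * fullCritExp Γ o * (gpBB o o p.1 p.2).toReal)

/-- The phase space `SX = ∂X × ∂X × ℝ` of the abstract geodesic flow. -/
def SX (o : X) : Type := (GromovBoundary o × GromovBoundary o) × ℝ

instance (o : X) : MeasurableSpace (SX o) :=
  inferInstanceAs (MeasurableSpace ((GromovBoundary o × GromovBoundary o) × ℝ))

/-- The geodesic flow on `SX`. -/
def flowSX (o : X) (t : ℝ) (v : SX o) : SX o := (v.1, v.2 + t)

/-- The cocycle `β(γ,ξ) = h_Γ⁻¹ log (d(γ⁻¹)_*ν/dν)(ξ)`. -/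
def betaCocycle (Γ : Type) [Group Γ] [MulAction Γ X] [IsIsometricSMul Γ X] (o : X)
    (ν : Measure (GromovBoundary o)) (γ : Γ) (ξ : GromovBoundary o) : ℝ :=
  (fullCritExp Γ o)⁻¹ *
    Real.log ((Measure.map (boundarySmul o γ⁻¹) ν).rnDeriv ν ξ).toReal

/-- The (measurable) action of `Γ` on `SX`:
`γ ⬝ (η,ξ,t) = (γη, γξ, t + κ_γ(η,ξ))`. -/
def smulSX (Γ : Type) [Group Γ] [MulAction Γ X] [IsIsometricSMul Γ X] (o : X)
    (ν : Measure (GromovBoundary o)) (γ : Γ) (v : SX o) : SX o :=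
  ((boundarySmul o γ v.1.1, boundarySmul o γ v.1.2),
    v.2 + (betaCocycle Γ o ν γ v.1.2 - betaCocycle Γ o ν γ v.1.1) / 2)

/-- The Bowen–Margulis measure `m = μ ⊗ dt` on `SX`. -/
def bmMeasure (o : X) (μ : Measure (GromovBoundary o × GromovBoundary o)) :
    Measure (SX o) :=
  μ.prod (volume : Measure ℝ)

/-- `D` is a Borel fundamental domain for the `Γ`-action on `SX`. -/
def IsFundDom (Γ : Type) [Group Γ] [MulAction Γ X] [IsIsometricSMul Γ X] (o : X)
    (ν : Measure (GromovBoundary o)) (μ : Measure (GromovBoundary o × GromovBoundary o))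
    (D : Set (SX o)) : Prop :=
  MeasurableSet D ∧ ∀ᵐ v ∂(bmMeasure o μ), ∃! γ : Γ, smulSX Γ o ν γ v ∈ D

/-- A subset of `SX` is `Γ`-invariant up to measure zero. -/
def GammaInvariant (Γ : Type) [Group Γ] [MulAction Γ X] [IsIsometricSMul Γ X] (o : X)
    (ν : Measure (GromovBoundary o)) (μ : Measure (GromovBoundary o × GromovBoundary o))
    (B : Set (SX o)) : Prop :=
  ∀ γ : Γ, bmMeasure o μ (B ∆ (smulSX Γ o ν γ ⁻¹' B)) = 0

/-- The measure `m̄` of a subset of `SX`, computed via the fundamental domain `D`. -/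
def mbar (o : X) (μ : Measure (GromovBoundary o × GromovBoundary o))
    (D B : Set (SX o)) : ℝ≥0∞ :=
  bmMeasure o μ (B ∩ D)

/-- Conservativity of the geodesic flow on `(SX, 𝓑_Γ, m̄)`: almost every point of
a `Γ`-invariant set of positive finite measure returns at unboundedly large times. -/
def ConservativeFlow (Γ : Type) [Group Γ] [MulAction Γ X] [IsIsometricSMul Γ X] (o : X)
    (ν : Measure (GromovBoundary o)) (μ : Measure (GromovBoundary o × GromovBoundary o))
    (D : Set (SX o)) : Prop :=
  ∀ B : Set (SX o), MeasurableSet B → GammaInvariant Γ o ν μ B →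
    0 < mbar o μ D B → mbar o μ D B < ⊤ →
    bmMeasure o μ ((B \ {v | ∀ T : ℝ, ∃ t : ℝ, T ≤ t ∧ flowSX o t v ∈ B}) ∩ D) = 0

/-- Ergodicity of the geodesic flow on `(SX, 𝓑_Γ, m̄)`. -/
def ErgodicFlow (Γ : Type) [Group Γ] [MulAction Γ X] [IsIsometricSMul Γ X] (o : X)
    (ν : Measure (GromovBoundary o)) (μ : Measure (GromovBoundary o × GromovBoundary o))
    (D : Set (SX o)) : Prop :=
  ∀ B : Set (SX o), MeasurableSet B → GammaInvariant Γ o ν μ B →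
    (∀ t : ℝ, bmMeasure o μ (B ∆ (flowSX o t ⁻¹' B)) = 0) →
    mbar o μ D B = 0 ∨ mbar o μ D Bᶜ = 0

/-- Ergodicity of the diagonal `Γ`-action on `(∂²X, μ)`. -/
def ErgodicBoundaryAction (Γ : Type) [Group Γ] [MulAction Γ X] [IsIsometricSMul Γ X] (o : X)
    (μ : Measure (GromovBoundary o × GromovBoundary o)) : Prop :=
  ∀ A : Set (GromovBoundary o × GromovBoundary o), MeasurableSet A →
    (∀ γ : Γ, μ (A ∆ (diagSmul o γ ⁻¹' A)) = 0) →
    μ A = 0 ∨ μ Aᶜ = 0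

/-- The Poincaré series of `Γ` diverges at `s = h_Γ`. -/
def Divergent (Γ : Type) [Group Γ] [MulAction Γ X] (o : X) : Prop :=
  ¬ Summable (fun γ : Γ => Real.exp (-(fullCritExp Γ o) * dist (γ • o) o))

end BowenMargulis

/-! ### Almost invariant vectors, co-amenability, properties (T) and (FM) -/

/-- The Koopman representation of the `Γ`-action on the countable set `Y`
almost has invariant vectors: for every finite `S ⊆ Γ` and `ε > 0` there is a
nonzero `φ ∈ ℓ²(Y)` with `‖ρ(γ)φ - φ‖ < ε ‖φ‖` for all `γ ∈ S`
(stated with squared `ℓ²` norms). -/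
def KoopmanAlmostInvariant (Γ Y : Type) [Group Γ] [MulAction Γ Y] : Prop :=
  ∀ S : Finset Γ, ∀ ε : ℝ, 0 < ε → ∃ φ : Y → ℝ, Memℓp φ 2 ∧ φ ≠ 0 ∧
    ∀ γ ∈ S, ∑' y : Y, (φ (γ⁻¹ • y) - φ y) ^ 2 < ε ^ 2 * ∑' y : Y, (φ y) ^ 2

/-- `Γ'` is co-amenable in `Γ`: the Koopman representation of `Γ` on `ℓ²` of the
coset space almost has invariant vectors. -/
def CoAmenable (Γ : Type) [Group Γ] (Γ' : Subgroup Γ) : Prop :=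
  KoopmanAlmostInvariant Γ (Γ ⧸ Γ')

/-- A unitary representation almost has invariant vectors. -/
def AlmostInvariantVectors {Γ : Type} [Group Γ] {H : Type} [NormedAddCommGroup H]
    [InnerProductSpace ℝ H] (ρ : Γ →* (H ≃ₗᵢ[ℝ] H)) : Prop :=
  ∀ S : Finset Γ, ∀ ε : ℝ, 0 < ε → ∃ φ : H, φ ≠ 0 ∧ ∀ γ ∈ S, ‖ρ γ φ - φ‖ < ε * ‖φ‖

/-- Kazhdan's property (T): every unitary representation which almost has
invariant vectors has a nonzero invariant vector. -/
def HasPropertyT (Γ : Type) [Group Γ] : Prop :=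
  ∀ (H : Type) [NormedAddCommGroup H] [InnerProductSpace ℝ H] [CompleteSpace H],
    ∀ ρ : Γ →* (H ≃ₗᵢ[ℝ] H), AlmostInvariantVectors ρ →
      ∃ φ : H, φ ≠ 0 ∧ ∀ γ : Γ, ρ γ φ = φ

/-- Property (FM): every action of `Γ` on a countable set whose Koopman
representation almost has invariant vectors has a finite orbit. -/
def HasPropertyFM (Γ : Type) [Group Γ] : Prop :=
  ∀ (Y : Type) [Countable Y], ∀ (_ : MulAction Γ Y),
    KoopmanAlmostInvariant Γ Y → ∃ y : Y, (MulAction.orbit Γ y).Finite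

/-! ### Twisted Poincaré series -/

/-- The twisted Poincaré series `A(s) = Σ e^{-s d(γ o, o)} ρ(γ)` is bounded. -/
def TwistedBounded {Γ : Type} [Group Γ] [MulAction Γ X] {H : Type}
    [NormedAddCommGroup H] [InnerProductSpace ℝ H]
    (ρ : Γ →* (H ≃ₗᵢ[ℝ] H)) (o : X) (s : ℝ) : Prop :=
  ∃ M : ℝ, ∀ S : Finset Γ,
    ‖∑ γ ∈ S, Real.exp (-s * dist (γ • o) o) •
        ((ρ γ).toLinearIsometry.toContinuousLinearMap : H →L[ℝ] H)‖ ≤ M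

/-- The critical exponent `h_ρ` of the representation `ρ`. -/
def twistedCritExp {Γ : Type} [Group Γ] [MulAction Γ X] {H : Type}
    [NormedAddCommGroup H] [InnerProductSpace ℝ H]
    (ρ : Γ →* (H ≃ₗᵢ[ℝ] H)) (o : X) : ℝ :=
  sInf {s : ℝ | 0 ≤ s ∧ TwistedBounded ρ o s}

/-! ### Word length and the horocone over a Cayley graph -/

/-- The word length of `γ` with respect to the generating set `S`. -/
def wordLength {P : Type} [Group P] (S : Set P) (γ : P) : ℕ :=
  sInf {n : ℕ | ∃ l : List P, l.length = n ∧ (∀ x ∈ l, x ∈ S) ∧ l.prod = γ}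

/-- `horoBase S γ = (√(|γ|² + 4) - |γ|)/2`, so that the orbital distance on the
horocone over the Cayley graph satisfies `e^{-d(γ o, o)} = (horoBase S γ)²`. -/
def horoBase {P : Type} [Group P] (S : Set P) (γ : P) : ℝ :=
  (Real.sqrt ((wordLength S γ : ℝ) ^ 2 + 4) - (wordLength S γ : ℝ)) / 2

/-! ### The twisted Poincaré series of a Koopman representation -/

/-- Boundedness of the twisted Poincaré series
`A(s) = Σ_γ e^{-s d(γ o, o)} ρ(γ)` for the Koopman representation of `Γ`
on `ℓ²` of the coset space of `Γ'` (stated with squared `ℓ²` norms). -/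
def KoopmanTwistedBounded {X : Type} [MetricSpace X] {Γ : Type} [Group Γ]
    [MulAction Γ X] (o : X) (Γ' : Subgroup Γ) (s : ℝ) : Prop :=
  ∃ M : ℝ, ∀ F : Finset Γ, ∀ φ : Γ ⧸ Γ' → ℝ, Memℓp φ 2 →
    ∑' y : Γ ⧸ Γ', (∑ γ ∈ F, Real.exp (-s * dist (γ • o) o) * φ (γ⁻¹ • y)) ^ 2
      ≤ M ^ 2 * ∑' y : Γ ⧸ Γ', (φ y) ^ 2

/-- The critical exponent `h_ρ` of the Koopman representation on `ℓ²(Γ'\Γ)`. -/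
def koopmanCritExp {X : Type} [MetricSpace X] {Γ : Type} [Group Γ]
    [MulAction Γ X] (o : X) (Γ' : Subgroup Γ) : ℝ :=
  sInf {s : ℝ | 0 ≤ s ∧ KoopmanTwistedBounded o Γ' s}

/-! Let `c` be a geodesic from `o` to `γ o` and `c'` a ray from `K` to a point `ξ ∈ 𝓛_K` with
`⟨γ o, ξ⟩_o ≥ T`. Up to time about `T - δ`, `c` fellow-travels `c'`, so a visit of `c` to `Γ k`
there is `4δ`-close to `c'`, hence lies in `Γ K` and so in `K`: all such visits stay within
`D + 10δ` of `o`, where `k ⊆ B(o, D)`. Let `c u ∈ h k` be the last visit to `Γ k` before time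
`T - δ - 1` and `c v ∈ g k` the first one after it. The segment of `c` between them meets `Γ k`
only at its ends, so `h⁻¹ g ∈ Γ_k`; properness leaves finitely many choices for `h`; and `γ o`
lies in the shadow of `g o`, which is at distance at least `T - D - δ - 1` from `o`. -/

theorem gromovProd_nonneg (x y z : X) : 0 ≤ gromovProd x y z := by
  have := dist_triangle x z y
  rw [dist_comm z y] at this
  unfold gromovProd
  linarith

theorem gromovProd_le_dist_left (x y z : X) : gromovProd x y z ≤ dist x z := by
  have := dist_triangle y x z
  rw [dist_comm y x] at this
  unfold gromovProd
  linarith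

theorem gromovProd_comm (x y z : X) : gromovProd x y z = gromovProd y x z := by
  unfold gromovProd
  rw [dist_comm x y]
  ring

section Geodesic

variable {c : ℝ → X} {I : Set ℝ}

theorem IsGeodesicOn.dist_eq_sub (hc : IsGeodesicOn c I) {s t : ℝ} (hs : s ∈ I) (ht : t ∈ I)
    (hst : s ≤ t) : dist (c s) (c t) = t - s := by
  rw [hc s hs t ht, abs_of_nonpos (sub_nonpos.2 hst), neg_sub]

theorem IsGeodesicOn.dist_zero_eq {d t : ℝ} (hc : IsGeodesicOn c (Icc 0 d)) (ht : t ∈ Icc 0 d) :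
    dist (c 0) (c t) = t := by
  rw [hc.dist_eq_sub ⟨le_rfl, ht.1.trans ht.2⟩ ht ht.1, sub_zero]

theorem IsGeodesicOn.mono {J : Set ℝ} (hc : IsGeodesicOn c I) (hJ : J ⊆ I) : IsGeodesicOn c J :=
  fun s hs t ht => hc s (hJ hs) t (hJ ht)

theorem IsGeodesicOn.continuousOn (hc : IsGeodesicOn c I) : ContinuousOn c I :=
  (LipschitzOnWith.of_dist_le_mul (K := 1) fun s hs t ht => by
    rw [hc s hs t ht, Real.dist_eq, NNReal.coe_one, one_mul]).continuousOn

theorem IsGeodesicOn.gromovProd_eq_zero {d t : ℝ} (hc : IsGeodesicOn c (Icc 0 d))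
    (ht : t ∈ Icc 0 d) : gromovProd (c 0) (c d) (c t) = 0 := by
  have h0 : (0 : ℝ) ∈ Icc 0 d := ⟨le_rfl, ht.1.trans ht.2⟩
  have hd : d ∈ Icc 0 d := ⟨ht.1.trans ht.2, le_rfl⟩
  unfold gromovProd
  rw [hc.dist_eq_sub h0 ht ht.1, dist_comm, hc.dist_eq_sub ht hd ht.2, hc.dist_eq_sub h0 hd hd.1]
  ring

theorem IsGeodesicOn.smul_comp_add [IsIsometricSMul Γ X] {u v : ℝ}
    (hc : IsGeodesicOn c (Icc u v)) (g : Γ) :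
    IsGeodesicOn (fun s => g • c (u + s)) (Icc 0 (v - u)) := by
  intro s hs t ht
  rw [dist_smul, hc (u + s) ⟨by linarith [hs.1], by linarith [hs.2]⟩
    (u + t) ⟨by linarith [ht.1], by linarith [ht.2]⟩, add_sub_add_left_eq_sub]

end Geodesic

section Hyperbolic

variable {δ : ℝ}

theorem GromovHyperbolicWith.nonneg (hhyp : GromovHyperbolicWith δ X) (x : X) : 0 ≤ δ := by
  have := hhyp x x x x
  simp only [gromovProd, dist_self, min_self] at this
  linarith

theorem GromovHyperbolicWith.gromovProd_le_of_lt (hhyp : GromovHyperbolicWith δ X)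
    {x y z t : X} (h : gromovProd x z t + δ < gromovProd x y t) :
    gromovProd y z t ≤ gromovProd x z t + δ :=
  (min_le_iff.1 (by linarith [hhyp x y z t] : min _ _ ≤ _)).resolve_left h.not_ge

/-- The witness is the point of parameter `⟨w, c L⟩_{c 0}`. -/
theorem GromovHyperbolicWith.exists_dist_le_of_isGeodesicOn (hhyp : GromovHyperbolicWith δ X)
    {c : ℝ → X} {L : ℝ} (hc : IsGeodesicOn c (Icc 0 L)) (hL : 0 ≤ L) (w : X) :
    ∃ s ∈ Icc 0 L, dist w (c s) ≤ gromovProd (c 0) (c L) w + 2 * δ := by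
  have hL' : L ∈ Icc 0 L := ⟨hL, le_rfl⟩
  set s := gromovProd w (c L) (c 0) with hs_def
  have hs : s ∈ Icc 0 L := by
    refine ⟨gromovProd_nonneg _ _ _, ?_⟩
    calc s = gromovProd (c L) w (c 0) := gromovProd_comm _ _ _
      _ ≤ dist (c L) (c 0) := gromovProd_le_dist_left _ _ _
      _ = L := by rw [dist_comm, hc.dist_zero_eq hL']
  refine ⟨s, hs, ?_⟩
  have key := hhyp (c 0) w (c L) (c s)
  rw [hc.gromovProd_eq_zero hs] at key
  have h0s := hc.dist_zero_eq hs
  have hsL := hc.dist_eq_sub hs hL' hs.2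
  have h0L := hc.dist_zero_eq hL'
  unfold gromovProd at key hs_def ⊢
  rcases min_le_iff.1 (show min _ _ ≤ δ by linarith) with h | h <;>
    linarith [dist_comm w (c 0), dist_comm w (c L), dist_comm w (c s), dist_comm (c L) (c s),
      dist_comm (c L) (c 0)]

theorem GromovHyperbolicWith.exists_dist_le_of_lt_gromovProd (hhyp : GromovHyperbolicWith δ X)
    {c c' : ℝ → X} {d L t : ℝ}
    (hc : IsGeodesicOn c (Icc 0 d)) (hc' : IsGeodesicOn c' (Icc 0 L)) (hL : 0 ≤ L)
    (ht : t ∈ Icc 0 d) (hfar : dist (c 0) (c' 0) + 2 * δ < t)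
    (hgp : t + δ < gromovProd (c d) (c' L) (c 0)) :
    ∃ s ∈ Icc 0 L, dist (c t) (c' s) ≤ 4 * δ := by
  have hct := hc.dist_zero_eq ht
  have hend : gromovProd (c d) (c 0) (c t) = 0 := by
    rw [gromovProd_comm, hc.gromovProd_eq_zero ht]
  have hfar' : δ < gromovProd (c d) (c' L) (c t) := by
    linarith [gromovProd_ge (c d) (c' L) (c 0) (c t)]
  have hL0 : gromovProd (c' L) (c 0) (c t) ≤ δ := by
    have := hhyp.gromovProd_le_of_lt (x := c d) (y := c' L) (z := c 0) (t := c t)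
      (by linarith)
    linarith
  have hbase : 2 * δ < gromovProd (c 0) (c' 0) (c t) := by
    have := dist_triangle (c 0) (c' 0) (c t)
    unfold gromovProd
    linarith
  have h0L : gromovProd (c' 0) (c' L) (c t) ≤ 2 * δ := by
    rw [gromovProd_comm (c' L)] at hL0
    linarith [hhyp.gromovProd_le_of_lt (x := c 0) (y := c' 0) (z := c' L) (t := c t)
      (by linarith)]
  obtain ⟨s, hs, hdist⟩ := hhyp.exists_dist_le_of_isGeodesicOn hc' hL (c t)
  exact ⟨s, hs, by linarith⟩

end Hyperbolic

theorem _root_.IsClosed.exists_consecutive_around {F : Set ℝ} (hF : IsClosed F) {a b τ : ℝ}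
    (ha : a ∈ F) (hb : b ∈ F) (hτ : τ ∈ Icc a b) :
    ∃ u ∈ F, ∃ v ∈ F, a ≤ u ∧ u ≤ τ ∧ τ ≤ v ∧ v ≤ b ∧
      ∀ t ∈ F, t ∈ Icc u v → t = u ∨ t = v := by
  have hE : IsCompact (Icc a τ ∩ F) := isCompact_Icc.inter_right hF
  have hE' : IsCompact (Icc τ b ∩ F) := isCompact_Icc.inter_right hF
  obtain ⟨⟨hau, huτ⟩, huF⟩ := hE.sSup_mem ⟨a, ⟨le_rfl, hτ.1⟩, ha⟩
  obtain ⟨⟨hτv, hvb⟩, hvF⟩ := hE'.sInf_mem ⟨b, ⟨hτ.2, le_rfl⟩, hb⟩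
  refine ⟨_, huF, _, hvF, hau, huτ, hτv, hvb, fun t htF ht => ?_⟩
  rcases le_total t τ with htτ | hτt
  · exact .inl (ht.1.antisymm' (le_csSup hE.bddAbove ⟨⟨hau.trans ht.1, htτ⟩, htF⟩))
  · exact .inr (ht.2.antisymm (csInf_le hE'.bddBelow ⟨⟨hτt, ht.2.trans hvb⟩, htF⟩))

theorem ProperAction.isClosed_iUnion_smul [ProperSpace X] [IsIsometricSMul Γ X]
    (hact : ProperAction Γ X) {k : Set X} (hk : IsCompact k) : IsClosed (⋃ g : Γ, g • k) := by
  refine LocallyFinite.isClosed_iUnion (fun z => ⟨ball z 1, ball_mem_nhds z one_pos, ?_⟩)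
    fun g => (hk.smul g).isClosed
  refine (hact _ (hk.union (isCompact_closedBall z 1))).subset ?_
  rintro g ⟨_, ⟨x, hx, rfl⟩, hxz⟩
  exact ⟨x, .inl hx, .inr (ball_subset_closedBall hxz)⟩

theorem mem_gammaK_of_isGeodesicOn {k : Set X} {g : Γ} {c : ℝ → X} {L : ℝ} {x y : X}
    (hx : x ∈ k) (hy : y ∈ k) (hc : IsGeodesicOn c (Icc 0 L)) (hL : 0 ≤ L)
    (hc0 : c 0 = x) (hcL : c L = g • y)
    (hgap : ∀ s ∈ Icc 0 L, c s ∈ ⋃ h : Γ, h • k → s = 0 ∨ s = L) : g ∈ gammaK Γ k := by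
  obtain rfl : L = dist x (g • y) := by rw [← hc0, ← hcL, hc.dist_zero_eq ⟨hL, le_rfl⟩]
  refine ⟨x, hx, y, hy, c, hc0, hcL, hc, ?_⟩
  rintro _ ⟨⟨s, hs, rfl⟩, hmem⟩
  rcases hgap s hs hmem with rfl | rfl
  · left
    rwa [hc0]
  · right
    rw [hcL]
    exact smul_mem_smul_set hy

/-- `u` and `v` are the last visit of `c` to `Γ • k` before `τ` and the first one after it. -/
theorem exists_mem_gammaK_around [ProperSpace X] [IsIsometricSMul Γ X]
    (hact : ProperAction Γ X) {k : Set X} (hk : IsCompact k) {c : ℝ → X} {d τ : ℝ}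
    (hc : IsGeodesicOn c (Icc 0 d)) (h0 : c 0 ∈ ⋃ g : Γ, g • k) (hd : c d ∈ ⋃ g : Γ, g • k)
    (hτ : τ ∈ Icc 0 d) :
    ∃ u v : ℝ, ∃ h g : Γ, 0 ≤ u ∧ u ≤ τ ∧ τ ≤ v ∧ v ≤ d ∧
      c u ∈ h • k ∧ c v ∈ g • k ∧ h⁻¹ * g ∈ gammaK Γ k := by
  have hF := hc.continuousOn.preimage_isClosed_of_isClosed isClosed_Icc
    (hact.isClosed_iUnion_smul hk)
  have hd0 : 0 ≤ d := hτ.1.trans hτ.2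
  obtain ⟨u, ⟨-, hu⟩, v, ⟨-, hv⟩, h0u, huτ, hτv, hvd, hgap⟩ :=
    hF.exists_consecutive_around ⟨⟨le_rfl, hd0⟩, h0⟩ ⟨⟨hd0, le_rfl⟩, hd⟩ hτ
  obtain ⟨h, hu⟩ := mem_iUnion.1 hu
  obtain ⟨g, hv⟩ := mem_iUnion.1 hv
  obtain ⟨x, hx, hhx⟩ := mem_smul_set.1 hu
  obtain ⟨y, hy, hgy⟩ := mem_smul_set.1 hv
  refine ⟨u, v, h, g, h0u, huτ, hτv, hvd, hu, hv, mem_gammaK_of_isGeodesicOn hx hy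
    ((hc.mono (Icc_subset_Icc h0u hvd)).smul_comp_add h⁻¹) (by linarith) ?_ ?_ ?_⟩
  · rw [add_zero, ← hhx, inv_smul_smul]
  · rw [add_sub_cancel, mul_smul, hgy]
  · intro s hs hmem
    obtain ⟨g', hg'⟩ := mem_iUnion.1 hmem
    have hback : c (u + s) ∈ ⋃ g : Γ, g • k := by
      have := smul_mem_smul_set (a := h) hg'
      rw [smul_inv_smul, smul_smul] at this
      exact mem_iUnion.2 ⟨_, this⟩
    rcases hgap (u + s) ⟨⟨by linarith [hs.1], by linarith [hs.2]⟩, hback⟩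
      ⟨by linarith [hs.1], by linarith [hs.2]⟩ with h' | h'
    · exact .inl (by linarith)
    · exact .inr (by linarith)

theorem Bord.ofX_mem_shadow {o x y : X} {r t : ℝ} {c : ℝ → X}
    (hc : IsGeodesicOn c (Icc 0 (dist o x))) (hc0 : c 0 = o) (hcx : c (dist o x) = x)
    (ht : t ∈ Icc 0 (dist o x)) (hty : dist (c t) y ≤ r) : Bord.ofX o x ∈ shadow o y r :=
  ⟨c, Icc 0 (dist o x), .inl ⟨x, rfl, rfl, hc0, hcx, hc⟩, t, ht, hty⟩

theorem gpPB_le_liminf (o base x : X) (u : {u : ℕ → X // SeqToInf o u}) :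
    gpPB o base x (mkBoundary o u) ≤ liminf (fun n => gromovProd x (u.1 n) base) atTop := by
  refine csInf_le ⟨0, ?_⟩ ⟨u, rfl, rfl⟩
  rintro _ ⟨v, -, rfl⟩
  exact le_liminf_of_le (isCoboundedUnder_ge_of_le atTop fun n => gromovProd_le_dist_left _ _ _)
    (.of_forall fun n => gromovProd_nonneg _ _ _)

theorem exists_lt_gromovProd_of_le_gpPB {o base x : X} {c : ℝ → X} {ξ : GromovBoundary o}
    (hξ : endsAt o c ξ) {T T' : ℝ} (hT : T ≤ gpPB o base x ξ) (hT' : T' < T) :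
    ∃ n : ℕ, T' < gromovProd x (c n) base := by
  obtain ⟨hseq, rfl⟩ := hξ
  by_contra! hle
  have := liminf_le_of_frequently_le (f := atTop) (.of_forall hle)
    (isBoundedUnder_of ⟨0, fun n => gromovProd_nonneg _ _ _⟩)
  linarith [gpPB_le_liminf o base x ⟨_, hseq⟩]

theorem exists_ray_of_mem_UKT {o x : X} {K : Set X} {T T' : ℝ}
    (hx : Bord.ofX o x ∈ UKT o Γ K T) (hT' : T' < T) :
    ∃ c : ℝ → X, IsGeodesicRay c ∧ c 0 ∈ K ∧ c '' Ici 0 ∩ ⋃ g : Γ, g • K ⊆ K ∧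
      ∃ n : ℕ, T' < gromovProd x (c n) o := by
  obtain ⟨ξ, ⟨c, hc, hc0, hend, havoid⟩, hT⟩ := hx
  exact ⟨c, hc, hc0, havoid, exists_lt_gromovProd_of_le_gpPB hend (EReal.coe_le_coe_iff.1 hT) hT'⟩

section IsometricAction

variable [IsIsometricSMul Γ X]

theorem smul_mem_of_dist_le {k : Set X} {ε : ℝ} {g : Γ} {w z : X} (hw : w ∈ k)
    (h : dist z (g • w) ≤ ε) : z ∈ g • {z | ∃ w ∈ k, dist z w ≤ ε} :=
  ⟨g⁻¹ • z, ⟨w, hw, by rwa [← dist_smul g, smul_inv_smul]⟩, smul_inv_smul g z⟩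

theorem le_of_mem_orbit_of_lt_gromovProd {δ : ℝ} (hhyp : GromovHyperbolicWith δ X) {o : X}
    {k K : Set X} {D : ℝ} (hkD : k ⊆ closedBall o D)
    (hK : K = {z | ∃ w ∈ k, dist z w ≤ 6 * δ}) {c c' : ℝ → X} {d L t : ℝ}
    (hc : IsGeodesicOn c (Icc 0 d)) (hc0 : c 0 = o) (hc' : IsGeodesicRay c')
    (hc'K : c' 0 ∈ K) (hc'avoid : c' '' Ici 0 ∩ ⋃ g : Γ, g • K ⊆ K) (hL : 0 ≤ L)
    (ht : t ∈ Icc 0 d) (htk : c t ∈ ⋃ g : Γ, g • k) (hgp : t + δ < gromovProd (c d) (c' L) o) :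
    t ≤ D + 10 * δ := by
  have hδ := hhyp.nonneg o
  have hKD : ∀ z ∈ K, dist o z ≤ D + 6 * δ := by
    rw [hK]
    rintro z ⟨w, hw, hzw⟩
    linarith [dist_triangle o w z, mem_closedBall'.1 (hkD hw), dist_comm z w]
  by_cases hnear : t ≤ D + 8 * δ
  · linarith
  obtain ⟨s, hs, hts⟩ := hhyp.exists_dist_le_of_lt_gromovProd hc (hc'.mono Icc_subset_Ici_self)
    hL ht (by rw [hc0]; linarith [hKD _ hc'K]) (by rwa [hc0])
  obtain ⟨g, w, hw, hgw⟩ := mem_iUnion.1 htk |>.imp fun g => mem_smul_set.1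
  have hs' : c' s ∈ K := hc'avoid ⟨⟨s, hs.1, rfl⟩, mem_iUnion.2 ⟨g, hK ▸ smul_mem_of_dist_le hw
    (by rw [hgw, dist_comm]; linarith)⟩⟩
  calc t = dist o (c t) := by rw [← hc0, hc.dist_zero_eq ht]
    _ ≤ dist o (c' s) + dist (c t) (c' s) := by rw [dist_comm (c t)]; exact dist_triangle _ _ _
    _ ≤ D + 10 * δ := by linarith [hKD _ hs']

end IsometricAction

theorem UKT_covered_by_shadows_general
    {X : Type} [MetricSpace X] [ProperSpace X]
    {Γ : Type} [Group Γ] [MulAction Γ X] [IsIsometricSMul Γ X]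
    (δ : ℝ) (hhyp : GromovHyperbolicWith δ X) (hgeo : GeodesicSpace X)
    (hact : ProperAction Γ X) (o : X)
    (k : Set X) (hk : IsCompact k) (hok : o ∈ k)
    (K : Set X) (hKdef : K = {z : X | ∃ w ∈ k, dist z w ≤ 6 * δ}) :
    ∃ (S : Finset Γ) (r : ℝ), 0 ≤ r ∧
      ∀ T : ℝ, 0 ≤ T → ∀ γ : Γ, Bord.ofX o (γ • o) ∈ UKT o Γ K T →
        ∃ β : Γ, (∃ s ∈ S, ∃ g ∈ gammaK Γ k, β = s * g) ∧
          T - r ≤ dist o (β • o) ∧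
          Bord.ofX o (γ • o) ∈ shadow o (β • o) r := by
  obtain ⟨D, hkD⟩ := hk.isBounded.subset_closedBall o
  have hD : 0 ≤ D := dist_nonneg.trans (mem_closedBall.1 (hkD hok))
  have hδ := hhyp.nonneg o
  have hS := hact _ (isCompact_closedBall o (D + 10 * δ))
  refine ⟨hS.toFinset, D + δ + 1, by positivity, fun T _ γ hγ => ?_⟩
  obtain ⟨c', hc', hc'K, hc'avoid, n, hn⟩ := exists_ray_of_mem_UKT hγ (sub_one_lt T)
  obtain ⟨c, hc0, hcγ, hc⟩ := hgeo o (γ • o)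
  have horbit (g : Γ) : g • o ∈ ⋃ h : Γ, h • k := mem_iUnion.2 ⟨g, smul_mem_smul_set hok⟩
  have hTd : T - 1 < dist o (γ • o) := by
    linarith [gromovProd_le_dist_left (γ • o) (c' n) o, dist_comm o (γ • o)]
  obtain ⟨u, v, h, g, hu0, huτ, hτv, hvd, hu, hv, hhg⟩ := exists_mem_gammaK_around hact hk hc
    (by rw [hc0, ← one_smul Γ o]; exact horbit 1) (by rw [hcγ]; exact horbit γ)
    (τ := max (T - δ - 1) 0) ⟨le_max_right _ _, max_le (by linarith) dist_nonneg⟩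
  have huD : u ≤ D + 10 * δ := by
    rcases le_max_iff.1 huτ with hle | hle
    · refine le_of_mem_orbit_of_lt_gromovProd hhyp hkD hKdef hc hc0 hc' hc'K hc'avoid
        n.cast_nonneg ⟨hu0, huτ.trans (hτv.trans hvd)⟩ (mem_iUnion.2 ⟨h, hu⟩) ?_
      rw [hcγ]
      linarith
    · linarith
  obtain ⟨x, hx, hhx⟩ := mem_smul_set.1 hu
  obtain ⟨y, hy, hgy⟩ := mem_smul_set.1 hv
  have hvg : dist (c v) (g • o) ≤ D := by
    rw [← hgy, dist_smul]
    exact mem_closedBall.1 (hkD hy)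
  have hov : dist o (c v) = v := by rw [← hc0, hc.dist_zero_eq ⟨hu0.trans (huτ.trans hτv), hvd⟩]
  refine ⟨g, ⟨h, ?_, h⁻¹ * g, hhg, (mul_inv_cancel_left h g).symm⟩, ?_,
    Bord.ofX_mem_shadow hc hc0 hcγ ⟨hu0.trans (huτ.trans hτv), hvd⟩ (by linarith)⟩
  · refine hS.mem_toFinset.2 ⟨x, closedBall_subset_closedBall (by linarith) (hkD hx), ?_⟩
    rw [hhx, mem_closedBall, dist_comm, ← hc0, hc.dist_zero_eq ⟨hu0, huτ.trans (hτv.trans hvd)⟩]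
    linarith
  · linarith [dist_triangle o (g • o) (c v), dist_comm (g • o) (c v), le_max_left (T - δ - 1) 0]

/-- Let `X` be a proper geodesic `δ`-hyperbolic space, `Γ` a
group acting properly by isometries on `X` with basepoint `o`, `k ⊆ X` a compact
set containing `o`, and `K` the closed `6δ`-neighbourhood of `k`. Then there exist
a finite subset `S ⊆ Γ` and `r ≥ 0` such that for every `T ≥ 0`,
`U_K^T ∩ Γ·o` is contained in the union of the shadows `O_o(βo,r)` over all
`β ∈ S·Γ_k` with `d(o,βo) ≥ T - r`. -/
theorem UKT_covered_by_shadows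
    {X : Type} [MetricSpace X] [ProperSpace X]
    {Γ : Type} [Group Γ] [MulAction Γ X] [IsIsometricSMul Γ X]
    (δ : ℝ) (hδ : 0 < δ) (hhyp : GromovHyperbolicWith δ X) (hgeo : GeodesicSpace X)
    (hact : ProperAction Γ X) (o : X)
    (k : Set X) (hk : IsCompact k) (hok : o ∈ k)
    (K : Set X) (hKdef : K = {z : X | ∃ w ∈ k, dist z w ≤ 6 * δ}) :
    ∃ (S : Finset Γ) (r : ℝ), 0 ≤ r ∧
      ∀ T : ℝ, 0 ≤ T → ∀ γ : Γ, Bord.ofX o (γ • o) ∈ UKT o Γ K T →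
        ∃ β : Γ, (∃ s ∈ S, ∃ g ∈ gammaK Γ k, β = s * g) ∧
          T - r ≤ dist o (β • o) ∧
          Bord.ofX o (γ • o) ∈ shadow o (β • o) r :=
  UKT_covered_by_shadows_general δ hhyp hgeo hact o k hk hok K hKdef

end SPR
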